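/- arXiv:1009.3975 — 3 statements merged into one kernel-verified Lean document; each statement's English description precedes it below -/
import Mathlib

section
/- Let n ≥ 1, 1 ≤ K ≤ n, and partition {1,…,n} = G ∪ B with |B| = K (so |G| = n − K). Let 0 < δ ≤ M. Then there exist constants c₁, c₂ > 0, depending only on n, K, δ, M, such that for all nonnegative reals λ₁,…,λ_n with δ ≤ λ_g ≤ M for every g ∈ G and 0 ≤ λ_m ≤ M for every m ∈ B, one has c₁ Σ_{m∈B} λ_m ≤ σ_{n−K+1}(λ₁,…,λ_n) ≤ c₂ Σ_{m∈B} λ_m. -/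
/-!
Every `(|G| + 1)`-subset of indices meets `B`, since `G ∪ B` exhausts the indices. Bounding the
other factors of its product by `M` gives `σ_{|G|+1} ≤ C(n, |G|+1) M^{|G|} Σ_{m ∈ B} λ_m`.
Conversely, the subsets `G ∪ {m}`, `m ∈ B`, are distinct and each contributes at least
`δ^{|G|} λ_m`, which gives `δ^{|G|} Σ_{m ∈ B} λ_m ≤ σ_{|G|+1}`.
-/

open Finset

/-- Elementary symmetric polynomial `σ_p(λ₁,…,λ_n)`. -/
noncomputable def esymm (n p : ℕ) (lam : Fin n → ℝ) : ℝ :=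
  ∑ s ∈ Finset.univ.powersetCard p, ∏ i ∈ s, lam i

section
variable {ι : Type*} [DecidableEq ι] {f : ι → ℝ} {G B : Finset ι}

theorem pow_card_mul_le_prod_insert {m : ι} (hm : m ∉ G) {δ : ℝ} (hδ : 0 ≤ δ) (hfm : 0 ≤ f m)
    (hG : ∀ g ∈ G, δ ≤ f g) : δ ^ #G * f m ≤ ∏ i ∈ insert m G, f i := by
  rw [prod_insert hm, mul_comm]
  gcongr
  calc δ ^ #G = ∏ _i ∈ G, δ := (prod_const δ).symm
    _ ≤ ∏ i ∈ G, f i := prod_le_prod (fun _ _ => hδ) hG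

variable [Fintype ι]

theorem pow_card_mul_sum_le_sum_powersetCard (hGB : Disjoint G B) {δ : ℝ} (hδ : 0 ≤ δ)
    (hf : ∀ i, 0 ≤ f i) (hG : ∀ g ∈ G, δ ≤ f g) :
    δ ^ #G * ∑ m ∈ B, f m ≤ ∑ s ∈ univ.powersetCard (#G + 1), ∏ i ∈ s, f i := by
  have hnotG : ∀ m ∈ B, m ∉ G := fun m hm hmG => disjoint_left.mp hGB hmG hm
  have hinj : Set.InjOn (insert · G) B := by
    intro a ha b hb hab
    have hab : insert a G = insert b G := hab
    have ha' : a ∈ insert b G := hab ▸ mem_insert_self a G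
    exact (mem_insert.mp ha').resolve_right (hnotG a ha)
  have himage : B.image (insert · G) ⊆ univ.powersetCard (#G + 1) := by
    simp only [subset_iff, mem_image, mem_powersetCard]
    rintro _ ⟨m, hm, rfl⟩
    exact ⟨subset_univ _, card_insert_of_notMem (hnotG m hm)⟩
  calc δ ^ #G * ∑ m ∈ B, f m = ∑ m ∈ B, δ ^ #G * f m := mul_sum _ _ _
    _ ≤ ∑ m ∈ B, ∏ i ∈ insert m G, f i :=
      sum_le_sum fun m hm => pow_card_mul_le_prod_insert (hnotG m hm) hδ (hf m) hG
    _ = ∑ s ∈ B.image (insert · G), ∏ i ∈ s, f i :=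
      (sum_image (f := fun s => ∏ i ∈ s, f i) hinj).symm
    _ ≤ ∑ s ∈ univ.powersetCard (#G + 1), ∏ i ∈ s, f i :=
      sum_le_sum_of_subset_of_nonneg himage fun s _ _ => prod_nonneg fun i _ => hf i

theorem prod_le_pow_mul_sum (hGB : G ∪ B = univ) {s : Finset ι} (hs : #s = #G + 1) {M : ℝ}
    (hf : ∀ i, 0 ≤ f i) (hfM : ∀ i, f i ≤ M) : ∏ i ∈ s, f i ≤ M ^ #G * ∑ m ∈ B, f m := by
  obtain ⟨m, hms, hmG⟩ := exists_mem_notMem_of_card_lt_card (s := G) (t := s) (by omega)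
  have hmB : m ∈ B := (mem_union.mp (hGB ▸ mem_univ m)).resolve_left hmG
  have hM : 0 ≤ M := (hf m).trans (hfM m)
  calc ∏ i ∈ s, f i = f m * ∏ i ∈ s.erase m, f i := (mul_prod_erase s f hms).symm
    _ ≤ f m * ∏ _i ∈ s.erase m, M :=
        mul_le_mul_of_nonneg_left (prod_le_prod (fun i _ => hf i) fun i _ => hfM i) (hf m)
    _ = M ^ #G * f m := by rw [prod_const, card_erase_of_mem hms, hs, Nat.add_sub_cancel, mul_comm]
    _ ≤ M ^ #G * ∑ m ∈ B, f m := by gcongr; exact single_le_sum (fun i _ => hf i) hmB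

theorem sum_powersetCard_le_choose_mul_sum (hGB : G ∪ B = univ) {M : ℝ}
    (hf : ∀ i, 0 ≤ f i) (hfM : ∀ i, f i ≤ M) :
    ∑ s ∈ univ.powersetCard (#G + 1), ∏ i ∈ s, f i ≤
      (Fintype.card ι).choose (#G + 1) * M ^ #G * ∑ m ∈ B, f m := by
  calc ∑ s ∈ univ.powersetCard (#G + 1), ∏ i ∈ s, f i
      ≤ ∑ _s ∈ univ.powersetCard (#G + 1), M ^ #G * ∑ m ∈ B, f m :=
        sum_le_sum fun s hs => prod_le_pow_mul_sum hGB (mem_powersetCard.mp hs).2 hf hfM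
    _ = (Fintype.card ι).choose (#G + 1) * M ^ #G * ∑ m ∈ B, f m := by
        rw [sum_const, card_powersetCard, card_univ, nsmul_eq_mul, mul_assoc]

end

theorem stmt5_general
    (n K : ℕ)
    (δ M : ℝ) (hδ : 0 < δ) (hδM : δ ≤ M) :
    ∃ c₁ c₂ : ℝ, 0 < c₁ ∧ 0 < c₂ ∧
      ∀ G B : Finset (Fin n), G ∪ B = Finset.univ → Disjoint G B → B.card = K →
        ∀ lam : Fin n → ℝ,
          (∀ i, 0 ≤ lam i) →
          (∀ g ∈ G, δ ≤ lam g ∧ lam g ≤ M) →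
          (∀ m ∈ B, lam m ≤ M) →
          c₁ * (∑ m ∈ B, lam m) ≤ esymm n (n - K + 1) lam ∧
            esymm n (n - K + 1) lam ≤ c₂ * (∑ m ∈ B, lam m) := by
  have hM : 0 < M := hδ.trans_le hδM
  refine ⟨δ ^ (n - K), (n.choose (n - K + 1) + 1) * M ^ (n - K), by positivity, by positivity, ?_⟩
  intro G B hGB hdisj hBK lam hlam hG hB
  have hGcard : #G = n - K := by
    have := card_union_of_disjoint hdisj
    rw [hGB, card_univ, Fintype.card_fin] at this
    omega
  have hlamM : ∀ i, lam i ≤ M := fun i =>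
    (mem_union.mp (hGB ▸ mem_univ i)).elim (fun hi => (hG i hi).2) (hB i)
  unfold esymm
  rw [← hGcard]
  refine ⟨pow_card_mul_sum_le_sum_powersetCard hdisj hδ.le hlam fun g hg => (hG g hg).1, ?_⟩
  calc _ ≤ n.choose (#G + 1) * M ^ #G * ∑ m ∈ B, lam m := by
        simpa using sum_powersetCard_le_choose_mul_sum hGB hlam hlamM
    _ ≤ (n.choose (#G + 1) + 1) * M ^ #G * ∑ m ∈ B, lam m := by
        gcongr
        · exact sum_nonneg fun i _ => hlam i
        · linarith

/-- **Lemma 2.2(a).** If the "good" eigenvalues (indices in `G`) lie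
in `[δ, M]` and the "bad" eigenvalues (indices in `B`, `|B| = K`) lie in `[0, M]`,
then `σ_{n−K+1}` is comparable to `Σ_{m∈B} λ_m`, with constants depending only on
`n, K, δ, M`. -/
theorem stmt5
    (n K : ℕ) (hK1 : 1 ≤ K) (hKn : K ≤ n)
    (δ M : ℝ) (hδ : 0 < δ) (hδM : δ ≤ M) :
    ∃ c₁ c₂ : ℝ, 0 < c₁ ∧ 0 < c₂ ∧
      ∀ G B : Finset (Fin n), G ∪ B = Finset.univ → Disjoint G B → B.card = K →
        ∀ lam : Fin n → ℝ,
          (∀ i, 0 ≤ lam i) →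
          (∀ g ∈ G, δ ≤ lam g ∧ lam g ≤ M) →
          (∀ m ∈ B, lam m ≤ M) →
          c₁ * (∑ m ∈ B, lam m) ≤ esymm n (n - K + 1) lam ∧
            esymm n (n - K + 1) lam ≤ c₂ * (∑ m ∈ B, lam m) :=
  stmt5_general n K δ M hδ hδM
end

section
/- Let J ⊆ L be finite index sets, let a_j > 0 for j ∈ J with S := Σ_{j∈J} a_j, let t > 0, ε ≥ 0, and let (p_ℓ)_{ℓ∈L}, (q_j)_{j∈J} be real numbers satisfying t·S = Σ_{ℓ∈L} p_ℓ² + ε. Define D := −(1/2) Σ_{j,k∈J, j≠k} (a_j a_k/(t S)) (p_k q_k/a_k − p_j q_j/a_j)² + Σ_{j∈J} q_j² (S/a_j − 1). Then D = (1/(2 t S)) Σ_{j,k∈J, j≠k} (q_j p_k a_k + q_k p_j a_j)²/(a_j a_k) + (1/(t S)) Σ_{j∈J} q_j² Σ_{k∈J, k≠j} (a_k/a_j)(Σ_{ℓ∈L, ℓ∉{j,k}} p_ℓ² + ε). In particular D ≥ 0. -/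
/-!
Both sides are sums over ordered pairs `j ≠ k` of `J`: on the left,
`q j ^ 2 * (S / a j - 1) = ∑_{k ≠ j} q j ^ 2 * a k / a j`, and on the right the Donaldson
equation turns `∑_{ℓ ∉ {j, k}} p ℓ ^ 2 + ε` into `t S - p j ^ 2 - p k ^ 2`. A sum over ordered
pairs only depends on the symmetrization of its summand in `(j, k)`, and the symmetrized
summands of the two sides agree by a rational-function identity. Nonnegativity is then
visible termwise.
-/

open Finset

section OffDiagonal

variable {ι M : Type*} [DecidableEq ι]

theorem Finset.sum_sum_erase_comm [AddCommMonoid M] (J : Finset ι) (F : ι → ι → M) :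
    ∑ j ∈ J, ∑ k ∈ J.erase j, F j k = ∑ j ∈ J, ∑ k ∈ J.erase j, F k j :=
  sum_comm' fun j k => by simp only [mem_erase]; tauto

theorem Finset.sum_sum_erase_congr_of_add_swap [AddCommGroup M] [IsAddTorsionFree M]
    (J : Finset ι) {F G : ι → ι → M}
    (h : ∀ j ∈ J, ∀ k ∈ J, j ≠ k → F j k + F k j = G j k + G k j) :
    ∑ j ∈ J, ∑ k ∈ J.erase j, F j k = ∑ j ∈ J, ∑ k ∈ J.erase j, G j k := by
  have symmetrize : ∀ H : ι → ι → M, 2 • ∑ j ∈ J, ∑ k ∈ J.erase j, H j k =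
      ∑ j ∈ J, ∑ k ∈ J.erase j, (H j k + H k j) := fun H => by
    rw [two_nsmul]
    nth_rw 2 [sum_sum_erase_comm]
    simp only [← sum_add_distrib]
  refine nsmul_right_injective two_ne_zero ?_
  simp only [symmetrize]
  exact sum_congr rfl fun j hj => sum_congr rfl fun k hk =>
    h j hj k (mem_of_mem_erase hk) (ne_of_mem_erase hk).symm

end OffDiagonal

theorem Finset.sum_erase_div_eq {ι K : Type*} [DecidableEq ι] [DivisionRing K]
    {J : Finset ι} {a : ι → K} {j : ι} (hj : j ∈ J) (ha : a j ≠ 0) :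
    ∑ k ∈ J.erase j, a k / a j = (∑ k ∈ J, a k) / a j - 1 := by
  rw [← sum_div, sum_erase_eq_sub hj, sub_div, div_self ha]

/-- After the `q j ^ 2 * (a k / a j)` terms cancel, the difference of the two sides is
`(p j ^ 2 + p k ^ 2) / (2 t S) * (q k ^ 2 * a j / a k - q j ^ 2 * a k / a j)`, which is
antisymmetric in `j, k`. -/
theorem d_terms_add_swap {aj ak pj pk qj qk t S : ℝ} (haj : aj ≠ 0) (hak : ak ≠ 0)
    (ht : t ≠ 0) (hS : S ≠ 0) :
    (-(1 / 2) * (aj * ak / (t * S) * (pk * qk / ak - pj * qj / aj) ^ 2) + qj ^ 2 * (ak / aj))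
      + (-(1 / 2) * (ak * aj / (t * S) * (pj * qj / aj - pk * qk / ak) ^ 2)
        + qk ^ 2 * (aj / ak))
    = (1 / (2 * t * S) * ((qj * pk * ak + qk * pj * aj) ^ 2 / (aj * ak))
        + 1 / (t * S) * (qj ^ 2 * (ak / aj * (t * S - pj ^ 2 - pk ^ 2))))
      + (1 / (2 * t * S) * ((qk * pj * aj + qj * pk * ak) ^ 2 / (ak * aj))
        + 1 / (t * S) * (qk ^ 2 * (aj / ak * (t * S - pk ^ 2 - pj ^ 2)))) := by
  field_simp
  ring

theorem d_terms_eq {L : Type*} [Fintype L] [DecidableEq L] (J : Finset L) {a p q : L → ℝ}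
    {t ε S : ℝ} (ha : ∀ j ∈ J, a j ≠ 0) (ht : t ≠ 0) (hS0 : S ≠ 0) (hS : S = ∑ j ∈ J, a j)
    (hcon : t * S = (∑ ℓ, p ℓ ^ 2) + ε) :
    -(1 / 2) * (∑ j ∈ J, ∑ k ∈ J.erase j,
          (a j * a k / (t * S)) * (p k * q k / a k - p j * q j / a j) ^ 2)
        + ∑ j ∈ J, q j ^ 2 * (S / a j - 1)
      = (1 / (2 * t * S)) * (∑ j ∈ J, ∑ k ∈ J.erase j,
          (q j * p k * a k + q k * p j * a j) ^ 2 / (a j * a k))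
        + (1 / (t * S)) * ∑ j ∈ J, q j ^ 2 *
          ∑ k ∈ J.erase j, (a k / a j) * ((∑ ℓ ∈ univ \ {j, k}, p ℓ ^ 2) + ε) := by
  have off_pair : ∀ j k, j ≠ k → (∑ ℓ ∈ univ \ {j, k}, p ℓ ^ 2) + ε = t * S - p j ^ 2 - p k ^ 2 :=
    fun j k hjk => by
      rw [sum_sdiff_eq_sub (subset_univ _), sum_pair hjk, hcon]
      ring
  calc _ = ∑ j ∈ J, ∑ k ∈ J.erase j,
          (-(1 / 2) * (a j * a k / (t * S) * (p k * q k / a k - p j * q j / a j) ^ 2)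
            + q j ^ 2 * (a k / a j)) := by
        rw [mul_sum, ← sum_add_distrib]
        refine sum_congr rfl fun j hj => ?_
        have hrow : S / a j - 1 = ∑ k ∈ J.erase j, a k / a j := by
          rw [hS, sum_erase_div_eq hj (ha j hj)]
        rw [mul_sum, hrow, mul_sum, ← sum_add_distrib]
    _ = ∑ j ∈ J, ∑ k ∈ J.erase j,
          (1 / (2 * t * S) * ((q j * p k * a k + q k * p j * a j) ^ 2 / (a j * a k))
            + 1 / (t * S) * (q j ^ 2 * (a k / a j * (t * S - p j ^ 2 - p k ^ 2)))) :=
        sum_sum_erase_congr_of_add_swap J fun j hj k hk _ =>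
          d_terms_add_swap (ha j hj) (ha k hk) ht hS0
    _ = _ := by
        rw [mul_sum, mul_sum, ← sum_add_distrib]
        refine sum_congr rfl fun j _ => ?_
        rw [mul_sum, mul_sum, mul_sum, ← sum_add_distrib]
        refine sum_congr rfl fun k hk => ?_
        rw [off_pair j k (ne_of_mem_erase hk).symm]

/-- **the 'D terms' identity.** Let `J ⊆ L` be finite index sets,
`a_j > 0` for `j ∈ J`, `S = Σ_{j∈J} a_j`, `t > 0`, `ε ≥ 0`, and suppose
`t·S = Σ_{ℓ∈L} p_ℓ² + ε` (the Donaldson equation). Then the quantity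
`D = −(1/2) Σ_{j≠k∈J} (a_j a_k/(tS)) (p_k q_k/a_k − p_j q_j/a_j)²
      + Σ_{j∈J} q_j² (S/a_j − 1)`
equals
`(1/(2tS)) Σ_{j≠k∈J} (q_j p_k a_k + q_k p_j a_j)²/(a_j a_k)
  + (1/(tS)) Σ_{j∈J} q_j² Σ_{k∈J, k≠j} (a_k/a_j)(Σ_{ℓ∈L, ℓ∉{j,k}} p_ℓ² + ε)`,
and in particular `D ≥ 0`. -/
theorem stmt14
    {L : Type*} [Fintype L] [DecidableEq L]
    (J : Finset L) (a : L → ℝ) (ha : ∀ j ∈ J, 0 < a j)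
    (t ε : ℝ) (ht : 0 < t) (hε : 0 ≤ ε)
    (p q : L → ℝ)
    (S : ℝ) (hS : S = ∑ j ∈ J, a j)
    (hcon : t * S = (∑ ℓ, (p ℓ) ^ 2) + ε)
    (D : ℝ)
    (hD : D = -(1/2) * (∑ j ∈ J, ∑ k ∈ J.erase j,
            (a j * a k / (t * S)) * (p k * q k / a k - p j * q j / a j) ^ 2)
          + ∑ j ∈ J, (q j) ^ 2 * (S / a j - 1)) :
    D = (1 / (2 * t * S)) * (∑ j ∈ J, ∑ k ∈ J.erase j,
            (q j * p k * a k + q k * p j * a j) ^ 2 / (a j * a k))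
        + (1 / (t * S)) * ∑ j ∈ J, (q j) ^ 2 *
            ∑ k ∈ J.erase j, (a k / a j) * ((∑ ℓ ∈ Finset.univ \ {j, k}, (p ℓ) ^ 2) + ε)
      ∧ 0 ≤ D := by
  obtain rfl | hJ := J.eq_empty_or_nonempty
  · simp [hD]
  have hS0 : 0 < S := hS ▸ sum_pos ha hJ
  have key := hD.trans (d_terms_eq J (fun j hj => (ha j hj).ne') ht.ne' hS0.ne' hS hcon)
  refine ⟨key, key ▸ add_nonneg (mul_nonneg (by positivity) ?_) (mul_nonneg (by positivity) ?_)⟩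
  · refine sum_nonneg fun j hj => sum_nonneg fun k hk => ?_
    have := ha j hj
    have := ha k (mem_of_mem_erase hk)
    positivity
  · refine sum_nonneg fun j hj => mul_nonneg (sq_nonneg _) (sum_nonneg fun k hk => ?_)
    have := ha j hj
    have := ha k (mem_of_mem_erase hk)
    positivity
end

section
/- Let t > 0, let a₁, a₂ > 0 with S := a₁ + a₂, let (b_{jk})_{j,k∈{1,2}} be a symmetric array of reals, let q₁, q₂ be reals, let L be a finite index set containing {1,2} with reals p_ℓ for ℓ ∈ L, and let ε ≥ 0 satisfy t·S = Σ_{ℓ∈L} p_ℓ² + ε. Define Q := t [ (1/(2S)) Σ_{j≠k} (a_k b_{jj} − a_j b_{kk})²/(a_j a_k) + Σ_{j≠k} b_{jk}²/a_j ] − Σ_{j≠k} (2 p_j q_j/(a_j S)) (a_k b_{jj} − a_j b_{kk}) − 2 Σ_{j≠k} p_k q_j b_{jk}/a_j + Σ_{j∈{1,2}} q_j² (S/a_j − 1), where all sums over j ≠ k range over ordered pairs of distinct indices in {1,2}. Then Q ≥ 0. -/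
/-!
Clearing the positive denominator `t S a₀ a₁` turns `Q` into a sum of two squares plus
`(t S - p₀² - p₁²)(a₁² q₀² + a₀² q₁²)`; the last term is nonnegative because the Donaldson
constraint gives `t S ≥ p₀² + p₁²` once the spatial indices other than the two good ones
are dropped.
-/

open Finset

theorem sum_comp_embedding_le_sum {ι L : Type*} [Fintype ι] [Fintype L] (e : ι ↪ L)
    {f : L → ℝ} (hf : ∀ ℓ, 0 ≤ f ℓ) : ∑ i, f (e i) ≤ ∑ ℓ, f ℓ := by
  rw [← sum_map univ e f]
  exact sum_le_univ_sum_of_nonneg hf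

/-- The quantity `Q` with its sums over the two good indices written out (`S = a₀ + a₁`). -/
noncomputable def donaldsonQ (t a₀ a₁ b₀₀ b₀₁ b₁₁ p₀ p₁ q₀ q₁ : ℝ) : ℝ :=
  t * ((a₁ * b₀₀ - a₀ * b₁₁) ^ 2 / (a₀ * a₁ * (a₀ + a₁)) + b₀₁ ^ 2 * (1 / a₀ + 1 / a₁))
    - 2 * (p₀ * q₀ / a₀ - p₁ * q₁ / a₁) * (a₁ * b₀₀ - a₀ * b₁₁) / (a₀ + a₁)
    - 2 * b₀₁ * (p₁ * q₀ / a₀ + p₀ * q₁ / a₁)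
    + q₀ ^ 2 * a₁ / a₀ + q₁ ^ 2 * a₀ / a₁

section donaldsonQ

variable {t a₀ a₁ b₀₀ b₀₁ b₁₁ p₀ p₁ q₀ q₁ : ℝ}

theorem mul_donaldsonQ_eq_sum_sq (ha₀ : a₀ ≠ 0) (ha₁ : a₁ ≠ 0) (hS : a₀ + a₁ ≠ 0) :
    t * (a₀ + a₁) * a₀ * a₁ * donaldsonQ t a₀ a₁ b₀₀ b₀₁ b₁₁ p₀ p₁ q₀ q₁ =
      (t * (a₁ * b₀₀ - a₀ * b₁₁) - (a₁ * p₀ * q₀ - a₀ * p₁ * q₁)) ^ 2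
      + (t * (a₀ + a₁) * b₀₁ - (a₁ * p₁ * q₀ + a₀ * p₀ * q₁)) ^ 2
      + (t * (a₀ + a₁) - p₀ ^ 2 - p₁ ^ 2) * (a₁ ^ 2 * q₀ ^ 2 + a₀ ^ 2 * q₁ ^ 2) := by
  unfold donaldsonQ
  field_simp
  ring

theorem donaldsonQ_nonneg (ht : 0 < t) (ha₀ : 0 < a₀) (ha₁ : 0 < a₁)
    (hp : p₀ ^ 2 + p₁ ^ 2 ≤ t * (a₀ + a₁)) :
    0 ≤ donaldsonQ t a₀ a₁ b₀₀ b₀₁ b₁₁ p₀ p₁ q₀ q₁ := by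
  have hden : 0 < t * (a₀ + a₁) * a₀ * a₁ := by positivity
  refine nonneg_of_mul_nonneg_right ?_ hden
  rw [mul_donaldsonQ_eq_sum_sq ha₀.ne' ha₁.ne' (by positivity)]
  have hslack : 0 ≤ t * (a₀ + a₁) - p₀ ^ 2 - p₁ ^ 2 := by linarith
  positivity

end donaldsonQ

/-- **nonnegativity of Q, the 'fourth formula'.** With two good
directions (`a 0, a 1 > 0`, `S = a 0 + a 1`), `t > 0`, a symmetric array `b`,
reals `q j`, reals `p ℓ` over a finite index set `L` containing the two good
indices (via the embedding `e`), `ε ≥ 0`, and the Donaldson constraint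
`t·S = Σ_ℓ p_ℓ² + ε`, the quantity `Q` is nonnegative. Sums over `j ≠ k` range
over ordered pairs of distinct indices in `{0,1}` (i.e. `{1,2}`). -/
theorem stmt16
    {L : Type*} [Fintype L] (e : Fin 2 ↪ L)
    (t ε : ℝ) (ht : 0 < t) (hε : 0 ≤ ε)
    (a : Fin 2 → ℝ) (ha : ∀ j, 0 < a j)
    (b : Fin 2 → Fin 2 → ℝ) (hb : ∀ j k, b j k = b k j)
    (q : Fin 2 → ℝ) (p : L → ℝ)
    (S : ℝ) (hS : S = a 0 + a 1)
    (hcon : t * S = (∑ ℓ, (p ℓ) ^ 2) + ε)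
    (Q : ℝ)
    (hQ : Q = t * ((1 / (2 * S)) * (∑ j : Fin 2, ∑ k ∈ Finset.univ.erase j,
              (a k * b j j - a j * b k k) ^ 2 / (a j * a k))
            + ∑ j : Fin 2, ∑ k ∈ Finset.univ.erase j, (b j k) ^ 2 / a j)
          - (∑ j : Fin 2, ∑ k ∈ Finset.univ.erase j,
              (2 * p (e j) * q j / (a j * S)) * (a k * b j j - a j * b k k))
          - 2 * (∑ j : Fin 2, ∑ k ∈ Finset.univ.erase j,
              p (e k) * q j * b j k / a j)
          + ∑ j : Fin 2, (q j) ^ 2 * (S / a j - 1)) :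
    0 ≤ Q := by
  have hQ' : Q = donaldsonQ t (a 0) (a 1) (b 0 0) (b 0 1) (b 1 1)
      (p (e 0)) (p (e 1)) (q 0) (q 1) := by
    have herase₀ : univ.erase (0 : Fin 2) = {1} := by decide
    have herase₁ : univ.erase (1 : Fin 2) = {0} := by decide
    simp only [hQ, hS, Fin.sum_univ_two, herase₀, herase₁, sum_singleton, hb 1 0, donaldsonQ]
    have ha₀ := (ha 0).ne'
    have ha₁ := (ha 1).ne'
    have hS₀ := (add_pos (ha 0) (ha 1)).ne'
    field_simp
    ring
  have hp : p (e 0) ^ 2 + p (e 1) ^ 2 ≤ t * (a 0 + a 1) := by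
    have hgood := sum_comp_embedding_le_sum e (f := fun ℓ ↦ p ℓ ^ 2) fun ℓ ↦ sq_nonneg _
    rw [Fin.sum_univ_two] at hgood
    rw [← hS]
    linarith
  exact hQ' ▸ donaldsonQ_nonneg ht (ha 0) (ha 1) hp
end
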